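/- arXiv:2006.06786 — 4 statements merged into one kernel-verified Lean document; each statement's English description precedes it below -/
import Mathlib

section
/- For even N ≥ 2 and every n ∈ ℕ, the function ρ^{(n)}(x) = B_{2n}(x/2 + 1/2) satisfies the eigenvalue equation N^{2n−1}·Σ_{k=0}^{N−1} ρ^{(n)}((y + c_k)/N) = ρ^{(n)}(y) for all y ∈ [0,1], where the preimages are (1−y)/N, (1+y)/N, (3−y)/N, (3+y)/N, ..., ((N−1)−y)/N, ((N−1)+y)/N; i.e. N^{2n−1}·[ρ^{(n)}((1−y)/N) + ρ^{(n)}((1+y)/N) + ... + ρ^{(n)}((y+N−1)/N)] = ρ^{(n)}(y). -/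
/-!
Put `x = (y + 1) / (2N)`, so that `N x = y/2 + 1/2`. The multiplication theorem writes
`B_{2n}(N x)` as `N^{2n-1}` times the sum of `B_{2n}(x + k/N)` over `k < N`. For `N = 2M`, the
points `x + (M + j)/N` are the images `u/2 + 1/2` of the preimages `u = (2j + 1 + y)/N`, while the
points `x + (M - 1 - j)/N` are images of `-(2j + 1 - y)/N`; since `B_{2n}` is symmetric about `1/2`,
the sign does not matter.
-/

open Polynomial Finset

theorem aeval_bernoulli_eq_bernoulliFun (k : ℕ) (x : ℝ) :
    aeval x (bernoulli k) = bernoulliFun k x := by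
  rw [bernoulliFun, eval_map, aeval_def]

theorem bernoulliFun_neg_div_two_add_half {k : ℕ} (hk : Even k) (u : ℝ) :
    bernoulliFun k (-u / 2 + 1 / 2) = bernoulliFun k (u / 2 + 1 / 2) := by
  rw [show -u / 2 + 1 / 2 = 1 - (u / 2 + 1 / 2) by ring, bernoulliFun_eval_one_sub,
    hk.neg_one_pow, one_mul]

theorem Finset.sum_range_add_self_eq_sum_pairs {β : Type*} [AddCommMonoid β] (f : ℕ → β)
    (M : ℕ) : ∑ k ∈ range (M + M), f k = ∑ j ∈ range M, (f (M - 1 - j) + f (M + j)) := by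
  rw [sum_range_add, sum_add_distrib, ← sum_range_reflect]

theorem bernoulliFun_eq_sum_tent_preimages {k : ℕ} (hk : Even k) {N : ℕ} (hN : N ≠ 0)
    (hNeven : Even N) (y : ℝ) :
    bernoulliFun k (y / 2 + 1 / 2) = (N : ℝ) ^ k / N *
      ∑ j ∈ range (N / 2), (bernoulliFun k (((2 * j + 1 : ℝ) - y) / N / 2 + 1 / 2) +
        bernoulliFun k (((2 * j + 1 : ℝ) + y) / N / 2 + 1 / 2)) := by
  obtain ⟨M, rfl⟩ := hNeven
  have hM0 : (M : ℝ) ≠ 0 := by exact_mod_cast (by omega : M ≠ 0)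
  rw [show y / 2 + 1 / 2 = (M + M : ℕ) * ((y + 1) / (2 * (M + M : ℕ))) by field_simp,
    bernoulliFun_mul k hN, sum_range_add_self_eq_sum_pairs, show (M + M) / 2 = M by omega]
  congr 1
  refine sum_congr rfl fun j hj => ?_
  have hjM : 1 + j ≤ M := by rw [add_comm]; exact mem_range.mp hj
  rw [← bernoulliFun_neg_div_two_add_half hk, Nat.sub_sub, Nat.cast_sub hjM]
  congr 2 <;>
  · push_cast
    field_simp
    ring

theorem bernoulli_eigenfunction_even_general (N : ℕ) (hN : 2 ≤ N) (hNeven : Even N)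
    (n : ℕ) (y : ℝ) :
    (N : ℝ) ^ (2 * (n : ℤ) - 1) *
        ∑ j ∈ Finset.range (N / 2),
          ((Polynomial.aeval ((((2 * j + 1 : ℝ) - y) / N) / 2 + 1 / 2)
              (Polynomial.bernoulli (2 * n)) : ℝ) +
            (Polynomial.aeval ((((2 * j + 1 : ℝ) + y) / N) / 2 + 1 / 2)
              (Polynomial.bernoulli (2 * n)) : ℝ)) =
      (Polynomial.aeval (y / 2 + 1 / 2) (Polynomial.bernoulli (2 * n)) : ℝ) := by
  have hN0 : N ≠ 0 := by omega
  simp only [aeval_bernoulli_eq_bernoulliFun]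
  rw [bernoulliFun_eq_sum_tent_preimages (even_two_mul n) hN0 hNeven,
    zpow_sub_one₀ (Nat.cast_ne_zero.mpr hN0), show 2 * (n : ℤ) = (2 * n : ℕ) by push_cast; rfl,
    zpow_natCast, ← div_eq_mul_inv]

/-- For even `N ≥ 2`, the function `ρ⁽ⁿ⁾(x) = B_{2n}(x/2 + 1/2)` (with `B_m` the
`m`-th Bernoulli polynomial) is an eigenfunction of the Perron–Frobenius
operator of the multi-upside-down tent map of slope `±N` with eigenvalue
`N^{-2n}`: summing over the `N` preimages `(1∓y)/N, (3∓y)/N, ...`  gives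
`N^{2n-1} · Σ = ρ⁽ⁿ⁾(y)`. -/
theorem bernoulli_eigenfunction_even (N : ℕ) (hN : 2 ≤ N) (hNeven : Even N)
    (n : ℕ) (y : ℝ) (hy : y ∈ Set.Icc (0 : ℝ) 1) :
    (N : ℝ) ^ (2 * (n : ℤ) - 1) *
        ∑ j ∈ Finset.range (N / 2),
          ((Polynomial.aeval ((((2 * j + 1 : ℝ) - y) / N) / 2 + 1 / 2)
              (Polynomial.bernoulli (2 * n)) : ℝ) +
            (Polynomial.aeval ((((2 * j + 1 : ℝ) + y) / N) / 2 + 1 / 2)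
              (Polynomial.bernoulli (2 * n)) : ℝ)) =
      (Polynomial.aeval (y / 2 + 1 / 2) (Polynomial.bernoulli (2 * n)) : ℝ) :=
  bernoulli_eigenfunction_even_general N hN hNeven n y
end

section
/- For odd N ≥ 3 and every n ≥ 1, the odd-degree Euler polynomial E_{2n−1} satisfies N^{2n−1}·[E_{2n−1}(y/N) + E_{2n−1}((2−y)/N) + E_{2n−1}((2+y)/N) + ... + E_{2n−1}((y + N − 1)/N)] = E_{2n−1}(y) for all y ∈ [0,1], so E_{2n−1} is a second, independent eigenfunction of the multi-tent map's Perron–Frobenius operator with the same eigenvalue N^{−2n}. -/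
/-!
Write `E = E_m`. From `B(1 + x) = B(x) + (m+1) x^m` for the Bernoulli polynomial `B = B_{m+1}`
one gets `E(x + 1) + E(x) = 2 x^m`, and from `B(1 - x) = B(x)` (as `m + 1` is even) the
reflection `E(1 - x) = -E(x)`. The first identity makes the polynomial
`D(x) = N^m ∑_{k<N} (-1)^k E(x + k/N) - E(N x)` antiperiodic with antiperiod `1/N` when `N` is
odd, and an antiperiodic polynomial vanishes: this is the multiplication theorem. Evaluating it
at `x = y/N` and reflecting the odd-indexed terms, `-E((y + 2j + 1)/N) = E((N - 2j - 1 - y)/N)`,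
gives exactly the sum over the preimages of `y` under the multi-tent map.
-/

/-- The `m`-th Euler polynomial (as a real function), via the classical identity
`E_m(x) = 2^{m+1}/(m+1) · (B_{m+1}((x+1)/2) - B_{m+1}(x/2))` with `B` the
Bernoulli polynomials (generating function `2 e^{xt}/(e^t+1)`). -/
noncomputable def eulerPoly (m : ℕ) (x : ℝ) : ℝ :=
  2 ^ (m + 1) / (m + 1) *
    ((Polynomial.aeval ((x + 1) / 2) (Polynomial.bernoulli (m + 1)) : ℝ) -
      (Polynomial.aeval (x / 2) (Polynomial.bernoulli (m + 1)) : ℝ))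

open Polynomial Finset

theorem Finset.sum_range_two_mul_add_one {M : Type*} [AddCommMonoid M] (g : ℕ → M) (t : ℕ) :
    ∑ k ∈ range (2 * t + 1), g k = g 0 + ∑ j ∈ range t, (g (2 * j + 1) + g (2 * j + 2)) := by
  induction t with
  | zero => simp
  | succ t ih =>
    rw [show 2 * (t + 1) + 1 = 2 * t + 1 + 1 + 1 by ring, sum_range_succ, sum_range_succ, ih,
      sum_range_succ, add_assoc, add_assoc]

theorem Finset.sum_range_neg_one_pow_mul_succ_of_odd {R : Type*} [Ring R] (g : ℕ → R) {N : ℕ}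
    (hN : Odd N) :
    ∑ k ∈ range N, (-1) ^ k * g (k + 1) = g 0 + g N - ∑ k ∈ range N, (-1) ^ k * g k := by
  have h := (sum_range_succ' (fun k ↦ (-1) ^ k * g k) N).symm.trans
    (sum_range_succ (fun k ↦ (-1) ^ k * g k) N)
  simp only [pow_succ, hN.neg_one_pow, mul_neg_one, neg_mul, sum_neg_distrib, pow_zero,
    one_mul] at h
  rw [← sub_eq_zero] at h ⊢
  rw [← neg_eq_zero, ← h]
  abel

theorem Polynomial.eq_zero_of_antiperiodic {R : Type*} [CommRing R] [IsDomain R] [CharZero R]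
    {p : R[X]} {c : R} (hc : c ≠ 0) (h : Function.Antiperiodic p.eval c) : p = 0 := by
  have hconst : p = C (p.eval 0) := by
    refine eq_of_infinite_eval_eq _ _ (Set.infinite_of_injective_forall_mem
      (f := fun k : ℕ ↦ k * (2 * c)) (fun k l hkl ↦ ?_) fun k ↦ ?_)
    · exact_mod_cast mul_right_cancel₀ (mul_ne_zero two_ne_zero hc) hkl
    · simpa using h.periodic_two_mul.nat_mul_eq k
  have h0 := h.eq
  rw [hconst, eval_C, eval_C, self_eq_neg] at h0
  rw [hconst, h0, map_zero]

section Bernoulli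

variable {A : Type*} [CommRing A] [Algebra ℚ A]

theorem Polynomial.aeval_one_add_bernoulli (n : ℕ) (x : A) :
    aeval (1 + x) (bernoulli n) = aeval x (bernoulli n) + n * x ^ (n - 1) := by
  simpa [aeval_comp] using congr_arg (aeval x) (bernoulli_comp_one_add_X n)

theorem Polynomial.aeval_one_sub_bernoulli (n : ℕ) (x : A) :
    aeval (1 - x) (bernoulli n) = (-1) ^ n * aeval x (bernoulli n) := by
  simpa [aeval_comp] using congr_arg (aeval x) (bernoulli_comp_one_sub_X n)

end Bernoulli

theorem eulerPoly_add_one_add (m : ℕ) (x : ℝ) :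
    eulerPoly m (x + 1) + eulerPoly m x = 2 * x ^ m := by
  have h := aeval_one_add_bernoulli (m + 1) (x / 2 : ℝ)
  rw [show 1 + x / 2 = (x + 1 + 1) / 2 by ring] at h
  simp only [eulerPoly, h, Nat.add_sub_cancel, div_pow]
  field_simp
  push_cast
  ring

theorem eulerPoly_one_sub {m : ℕ} (hm : Odd m) (x : ℝ) :
    eulerPoly m (1 - x) = -eulerPoly m x := by
  have h₁ := aeval_one_sub_bernoulli (m + 1) (x / 2 : ℝ)
  have h₂ := aeval_one_sub_bernoulli (m + 1) ((x + 1) / 2 : ℝ)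
  rw [hm.add_one.neg_one_pow, one_mul] at h₁ h₂
  rw [show 1 - x / 2 = (1 - x + 1) / 2 by ring] at h₁
  rw [show 1 - (x + 1) / 2 = (1 - x) / 2 by ring] at h₂
  simp only [eulerPoly, h₁, h₂]
  ring

theorem exists_eval_eq_eulerPoly (m : ℕ) : ∃ p : ℝ[X], ∀ x, p.eval x = eulerPoly m x :=
  ⟨C (2 ^ (m + 1) / (m + 1) : ℝ) *
      (((Polynomial.bernoulli (m + 1)).map (algebraMap ℚ ℝ)).comp (C 2⁻¹ * (X + 1)) -
        ((Polynomial.bernoulli (m + 1)).map (algebraMap ℚ ℝ)).comp (C 2⁻¹ * X)), fun x ↦ by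
    simp only [eulerPoly, eval_mul, eval_sub, eval_C, eval_comp, eval_add, eval_X, eval_one,
      eval_map_algebraMap]
    rw [inv_mul_eq_div, inv_mul_eq_div]⟩

theorem antiperiodic_pow_mul_alternating_sum_sub {K : Type*} [Field K] [CharZero K] {f : K → K}
    {m N : ℕ} (hf : ∀ x, f (x + 1) + f x = 2 * x ^ m) (hN : Odd N) :
    Function.Antiperiodic
      (fun x ↦ (N : K) ^ m * ∑ k ∈ range N, (-1) ^ k * f (x + k / N) - f (N * x)) (1 / N) := by
  intro x
  have hN0 : (N : K) ≠ 0 := Nat.cast_ne_zero.2 hN.pos.ne'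
  have hshift : ∀ k : ℕ, x + 1 / N + k / N = x + (k + 1 : ℕ) / N := fun k ↦ by
    push_cast; ring
  have hsum := sum_range_neg_one_pow_mul_succ_of_odd (fun k : ℕ ↦ f (x + k / N)) hN
  simp only [Nat.cast_zero, zero_div, add_zero, div_self hN0] at hsum
  simp only [hshift, hsum, show (N : K) * (x + 1 / N) = N * x + 1 by field_simp]
  linear_combination (N : K) ^ m * hf x - hf (N * x) + 2 * x ^ m * (mul_pow (N : K) x m).symm

theorem eulerPoly_mul_of_odd (m : ℕ) {N : ℕ} (hN : Odd N) (x : ℝ) :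
    (N : ℝ) ^ m * ∑ k ∈ range N, (-1) ^ k * eulerPoly m (x + k / N) = eulerPoly m (N * x) := by
  obtain ⟨p, hp⟩ := exists_eval_eq_eulerPoly m
  set D : ℝ[X] := C ((N : ℝ) ^ m) * ∑ k ∈ range N, C ((-1) ^ k) * p.comp (X + C (k / N : ℝ)) -
    p.comp (C (N : ℝ) * X)
  have hD : ∀ x, D.eval x =
      (N : ℝ) ^ m * ∑ k ∈ range N, (-1) ^ k * eulerPoly m (x + k / N) - eulerPoly m (N * x) :=
    fun x ↦ by simp [D, eval_finsetSum, hp]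
  have hD0 : D = 0 := by
    refine eq_zero_of_antiperiodic (c := 1 / N) (by simpa using hN.pos.ne') fun x ↦ ?_
    simpa only [hD] using antiperiodic_pow_mul_alternating_sum_sub (eulerPoly_add_one_add m) hN x
  rw [← sub_eq_zero, ← hD, hD0, eval_zero]

theorem sum_neg_one_pow_mul_eq_tent_preimages {f : ℝ → ℝ} (hf : ∀ x, f (1 - x) = -f x)
    {N t : ℕ} (hN : N = 2 * t + 1) (y : ℝ) :
    ∑ k ∈ range N, (-1) ^ k * f (y / N + k / N) =
      f (y / N) + ∑ j ∈ range t, (f ((2 * j + 2 - y) / N) + f ((2 * j + 2 + y) / N)) := by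
  have hreflect : ∀ j ∈ range t,
      f ((2 * j + 2 - y) / N) = -f (y / N + (2 * (t - 1 - j) + 1 : ℕ) / N) := fun j hj ↦ by
    rw [← hf]
    congr 1
    rw [Nat.sub_sub, Nat.cast_add, Nat.cast_mul, Nat.cast_sub (by simp at hj; omega), hN]
    field_simp
    push_cast
    ring
  rw [sum_add_distrib, sum_congr rfl hreflect,
    sum_range_reflect (fun j ↦ -f (y / N + (2 * j + 1 : ℕ) / N)) t, ← sum_add_distrib, hN,
    sum_range_two_mul_add_one, ← hN]
  congr 1
  · simp
  · refine sum_congr rfl fun j _ ↦ ?_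
    rw [show 2 * j + 2 = 2 * (j + 1) by ring, (odd_two_mul_add_one j).neg_one_pow,
      (even_two_mul (j + 1)).neg_one_pow]
    push_cast
    ring_nf

theorem euler_eigenfunction_odd_general (N : ℕ) (hNodd : Odd N)
    (n : ℕ) (hn : 1 ≤ n) (y : ℝ) :
    (N : ℝ) ^ (2 * (n : ℤ) - 1) *
        (eulerPoly (2 * n - 1) (y / N) +
          ∑ j ∈ Finset.range ((N - 1) / 2),
            (eulerPoly (2 * n - 1) (((2 * (j : ℝ) + 2) - y) / N) +
              eulerPoly (2 * n - 1) (((2 * (j : ℝ) + 2) + y) / N))) =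
      eulerPoly (2 * n - 1) y := by
  obtain ⟨t, ht⟩ := hNodd
  have hm : Odd (2 * n - 1) := ⟨n - 1, by omega⟩
  have hN0 : (N : ℝ) ≠ 0 := Nat.cast_ne_zero.2 (by omega)
  rw [show 2 * (n : ℤ) - 1 = (2 * n - 1 : ℕ) by omega, zpow_natCast, show (N - 1) / 2 = t by omega,
    ← sum_neg_one_pow_mul_eq_tent_preimages (eulerPoly_one_sub hm) ht,
    eulerPoly_mul_of_odd _ ⟨t, ht⟩, mul_div_cancel₀ y hN0]

/-- For odd `N ≥ 3` and `n ≥ 1`, the odd-degree Euler polynomial `E_{2n-1}` is a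
second, independent eigenfunction of the Perron–Frobenius operator of the
multi-tent map of slope `±N`, with the same eigenvalue `N^{-2n}`: summing over
the `N` preimages `y/N, (2-y)/N, (2+y)/N, ..., ((N-1)+y)/N` gives
`N^{2n-1} · Σ = E_{2n-1}(y)`. -/
theorem euler_eigenfunction_odd (N : ℕ) (hN : 3 ≤ N) (hNodd : Odd N)
    (n : ℕ) (hn : 1 ≤ n) (y : ℝ) (hy : y ∈ Set.Icc (0 : ℝ) 1) :
    (N : ℝ) ^ (2 * (n : ℤ) - 1) *
        (eulerPoly (2 * n - 1) (y / N) +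
          ∑ j ∈ Finset.range ((N - 1) / 2),
            (eulerPoly (2 * n - 1) (((2 * (j : ℝ) + 2) - y) / N) +
              eulerPoly (2 * n - 1) (((2 * (j : ℝ) + 2) + y) / N))) =
      eulerPoly (2 * n - 1) y :=
  euler_eigenfunction_odd_general N hNodd n hn y
end

section
/- For even N = 2q (q ≥ 1) and m ≥ 2, the semi-conjugacy identity (−T_{m,0}) ∘ T_{2q, −π/m} = T_{2q, 0} ∘ (−T_{m,0}) holds on [−1,1], and moreover both sides equal T_{2qm, 0}; here T_{N,a}(x) = cos(N·arccos x + a). -/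
/-!
Since `cos (n * arccos (cos ψ)) = cos (n * ψ)` for every real `ψ`, all three expressions reduce
to `cos (2 q m θ)` with `θ = arccos x`: multiplying the shift `-π/m` by `m` gives `-π`, which
the outer sign undoes, and on the other side `arccos (-y) = π - arccos y` is absorbed by the
even order `2 q`.
-/

open Real

theorem cos_intCast_mul_arccos_cos (n : ℤ) (ψ : ℝ) :
    cos (n * arccos (cos ψ)) = cos (n * ψ) := by
  rw [← Polynomial.Chebyshev.T_real_cos, cos_arccos (neg_one_le_cos ψ) (cos_le_one ψ),
    Polynomial.Chebyshev.T_real_cos]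

theorem cos_natCast_mul_arccos_cos (n : ℕ) (ψ : ℝ) :
    cos (n * arccos (cos ψ)) = cos (n * ψ) :=
  mod_cast cos_intCast_mul_arccos_cos n ψ

theorem cos_two_mul_mul_arccos_neg (q : ℕ) (y : ℝ) :
    cos ((2 * q : ℕ) * arccos (-y)) = cos ((2 * q : ℕ) * arccos y) := by
  rw [arccos_neg, ← cos_nat_mul_two_pi_sub _ q]
  push_cast
  ring_nf

theorem neg_cos_mul_arccos_cos_add_neg_pi_div {m : ℕ} (hm : m ≠ 0) (ψ : ℝ) :
    -cos (m * arccos (cos (ψ + -(π / m)))) = cos (m * ψ) := by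
  rw [cos_natCast_mul_arccos_cos, mul_add, mul_neg, mul_div_cancel₀ _ (Nat.cast_ne_zero.2 hm),
    ← sub_eq_add_neg, cos_sub_pi, neg_neg]

theorem shifted_chebyshev_semiconjugacy_even_general (q m : ℕ) (hm : 2 ≤ m) (x : ℝ) :
    let T : ℕ → ℝ → ℝ → ℝ := fun N a y => Real.cos ((N : ℝ) * Real.arccos y + a)
    (-(T m 0 (T (2 * q) (-(π / m)) x)) = T (2 * q) 0 (-(T m 0 x)) ∧
      -(T m 0 (T (2 * q) (-(π / m)) x)) = T (2 * q * m) 0 x ∧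
      T (2 * q) 0 (-(T m 0 x)) = T (2 * q * m) 0 x) := by
  intro T
  have hmul : T (2 * q * m) 0 x = cos (m * ((2 * q : ℕ) * arccos x)) := by
    simp only [T, add_zero]
    push_cast
    ring_nf
  have hleft : -(T m 0 (T (2 * q) (-(π / m)) x)) = T (2 * q * m) 0 x := by
    simpa only [T, add_zero, hmul] using
      neg_cos_mul_arccos_cos_add_neg_pi_div (by omega) ((2 * q : ℕ) * arccos x)
  have hright : T (2 * q) 0 (-(T m 0 x)) = T (2 * q * m) 0 x := by
    simp only [T, add_zero, cos_two_mul_mul_arccos_neg, cos_natCast_mul_arccos_cos, hmul]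
    push_cast
    ring_nf
  exact ⟨hleft.trans hright.symm, hleft, hright⟩

/-- Semi-conjugacy identity for even-order shifted Chebyshev maps: with
`T_{N,a}(x) = cos (N arccos x + a)`, for `N = 2q` and `m ≥ 2`,
`(-T_{m,0}) ∘ T_{2q,-π/m} = T_{2q,0} ∘ (-T_{m,0})` on `[-1,1]`, and both sides
equal `T_{2qm,0}`. -/
theorem shifted_chebyshev_semiconjugacy_even (q m : ℕ) (hq : 1 ≤ q) (hm : 2 ≤ m)
    (x : ℝ) (hx : x ∈ Set.Icc (-1 : ℝ) 1) :
    let T : ℕ → ℝ → ℝ → ℝ := fun N a y => Real.cos ((N : ℝ) * Real.arccos y + a)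
    (-(T m 0 (T (2 * q) (-(π / m)) x)) = T (2 * q) 0 (-(T m 0 x)) ∧
      -(T m 0 (T (2 * q) (-(π / m)) x)) = T (2 * q * m) 0 x ∧
      T (2 * q) 0 (-(T m 0 x)) = T (2 * q * m) 0 x) :=
  shifted_chebyshev_semiconjugacy_even_general q m hm x
end

section
/- For odd N ≥ 3 and m ≥ 2, on [−1,1] one has (−T_{2m,0}) ∘ T_{N, −π/m} = T_{N,0} ∘ (−T_{2m,0}) = −T_{2mN, 0}, where T_{N,a}(x) = cos(N·arccos x + a). -/
open Real

private lemma cos_mul_arccos_cos (n : ℕ) (α : ℝ) :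
    Real.cos ((n : ℝ) * Real.arccos (Real.cos α)) = Real.cos ((n : ℝ) * α) := by
  have h1 : Real.cos (Real.arccos (Real.cos α)) = Real.cos α :=
    Real.cos_arccos (neg_one_le_cos α) (cos_le_one α)
  have e1 := Polynomial.Chebyshev.T_real_cos (Real.arccos (Real.cos α)) (n : ℤ)
  have e2 := Polynomial.Chebyshev.T_real_cos α (n : ℤ)
  rw [h1] at e1
  rw [e2] at e1
  exact_mod_cast e1.symm

/-- Semi-conjugacy identity for odd-order shifted Chebyshev maps: with
`T_{N,a}(x) = cos (N arccos x + a)`, for odd `N ≥ 3` and `m ≥ 2`,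
`(-T_{2m,0}) ∘ T_{N,-π/m} = T_{N,0} ∘ (-T_{2m,0}) = -T_{2mN,0}` on `[-1,1]`. -/
theorem shifted_chebyshev_semiconjugacy_odd (N m : ℕ) (hN : 3 ≤ N)
    (hNodd : Odd N) (hm : 2 ≤ m) (x : ℝ) (hx : x ∈ Set.Icc (-1 : ℝ) 1) :
    let T : ℕ → ℝ → ℝ → ℝ := fun k a y => Real.cos ((k : ℝ) * Real.arccos y + a)
    (-(T (2 * m) 0 (T N (-(π / m)) x)) = T N 0 (-(T (2 * m) 0 x)) ∧
      -(T (2 * m) 0 (T N (-(π / m)) x)) = -(T (2 * m * N) 0 x) ∧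
      T N 0 (-(T (2 * m) 0 x)) = -(T (2 * m * N) 0 x)) := by
  intro T
  have hm0 : (m : ℝ) ≠ 0 := by positivity
  set θ := Real.arccos x with hθ
  -- first composition
  have h1 : T (2 * m) 0 (T N (-(π / m)) x) = Real.cos (2 * m * N * θ) := by
    show Real.cos ((2 * m : ℕ) * Real.arccos (Real.cos ((N : ℝ) * θ + -(π / m))) + 0)
      = _
    rw [add_zero, cos_mul_arccos_cos]
    have : ((2 * m : ℕ) : ℝ) * ((N : ℝ) * θ + -(π / m)) =
        2 * m * N * θ - 2 * π := by
      push_cast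
      field_simp
      ring
    rw [this, Real.cos_sub, Real.cos_two_pi, Real.sin_two_pi]
    ring
  -- second composition
  have h2 : T N 0 (-(T (2 * m) 0 x)) = -Real.cos (2 * m * N * θ) := by
    show Real.cos ((N : ℝ) * Real.arccos (-(Real.cos ((2 * m : ℕ) * θ + 0))) + 0)
      = _
    rw [add_zero, add_zero]
    have hneg : -(Real.cos ((2 * m : ℕ) * θ)) = Real.cos (π - (2 * m : ℕ) * θ) := by
      rw [Real.cos_pi_sub]
    rw [hneg, cos_mul_arccos_cos]
    obtain ⟨j, hj⟩ := hNodd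
    have : (N : ℝ) * (π - (2 * m : ℕ) * θ) = -(2 * m * N * θ) + N * π := by
      push_cast
      ring
    rw [this]
    have hNpi : Real.cos (-(2 * m * N * θ) + N * π) = -Real.cos (2 * m * N * θ) := by
      have : (N : ℝ) * π = (N : ℤ) * π := by push_cast; ring
      rw [add_comm, ← sub_neg_eq_add, this, Real.cos_int_mul_pi_sub]
      have : ((-1 : ℝ)) ^ (N : ℤ) = -1 := by
        rw [show ((N : ℤ)) = 2 * (j : ℤ) + 1 by exact_mod_cast hj]
        rw [zpow_add₀ (by norm_num : (-1:ℝ) ≠ 0), zpow_mul]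
        norm_num
      rw [this]
      simp [Real.cos_neg]
    exact hNpi
  -- target value
  have h3 : T (2 * m * N) 0 x = Real.cos (2 * m * N * θ) := by
    show Real.cos ((2 * m * N : ℕ) * θ + 0) = _
    rw [add_zero]; push_cast; ring_nf
  exact ⟨by rw [h1, h2], by rw [h1, h3], by rw [h2, h3]⟩
end
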